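/- arXiv:1409.8566 — 2 statements merged into one kernel-verified Lean document; each statement's English description precedes it below -/
import Mathlib

section
/- Let a = (a_1,…,a_n) be a vector of nonnegative integers. The map sending a point x = (x_{i,j}) of Tes_n(a) to its support indicator T_x, defined by T_x(i,j) = 1 if x_{i,j} > 0 and T_x(i,j) = 0 otherwise, restricts to a bijection from the set of extreme points (vertices) of Tes_n(a) onto the set of a-Tesler tableaux of dimension 0. -/
open Finset

/-- The Tesler polytope `Tes_n(a)`: upper triangular `n × n` matrices with nonnegative
real entries whose `k`-th hook sum equals `a k`.  Entries strictly below the diagonal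
are required to be `0`. -/
def TeslerPolytope (n : ℕ) (a : Fin n → ℕ) : Set (Fin n → Fin n → ℝ) :=
  {x | (∀ i j : Fin n, j < i → x i j = 0) ∧
       (∀ i j : Fin n, i ≤ j → 0 ≤ x i j) ∧
       (∀ k : Fin n,
         (∑ j ∈ univ.filter (fun j => k ≤ j), x k j)
           - (∑ i ∈ univ.filter (fun i => i < k), x i k) = (a k : ℝ))}

/-- An `a`-Tesler tableau: a `{0,1}`-filling `T` of the reverse staircase
`{(i,j) : 1 ≤ i ≤ j ≤ n}` (recorded as a function on all pairs, vanishing below the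
diagonal) such that:
(1) if `a i > 0` then row `i` contains a `1`;
(2) if `i < j` and `T i j = 1` then row `j` contains a `1`;
(3) if `a j = 0` and `T i j = 0` for all `i < j`, then row `j` is zero. -/
def IsTeslerTableau (n : ℕ) (a : Fin n → ℕ) (T : Fin n → Fin n → ℕ) : Prop :=
  (∀ i j : Fin n, ¬ i ≤ j → T i j = 0) ∧
  (∀ i j : Fin n, T i j ≤ 1) ∧
  (∀ i : Fin n, 0 < a i → ∃ j : Fin n, i ≤ j ∧ T i j = 1) ∧
  (∀ i j : Fin n, i < j → T i j = 1 → ∃ k : Fin n, j ≤ k ∧ T j k = 1) ∧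
  (∀ j : Fin n, a j = 0 → (∀ i : Fin n, i < j → T i j = 0) →
    ∀ k : Fin n, j ≤ k → T j k = 0)

/-- The dimension of a Tesler tableau: `∑ i (r_i - 1)` where `r_i` is the number of
`1`'s in row `i` if row `i` is nonzero, and `r_i = 1` if row `i` is zero. -/
def tabDim (n : ℕ) (T : Fin n → Fin n → ℕ) : ℕ :=
  ∑ i : Fin n, ((univ.filter (fun j => T i j = 1)).card - 1)

/-!
A point of `Tes_n(a)` is a flow on the staircase: row `k` sends out `a k` plus whatever enters
column `k`. At an extreme point every row has at most one positive entry: two positive entries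
`(i, j)` and `(i, k)` each start a unit flow running down along positive entries, and the
difference of these two flows moves the point in both directions inside the polytope. Conversely,
a point with at most one positive entry per row is the only point of the polytope whose support
lies in its own, so it is extreme and the support map is injective. The support of any point
satisfies the Tesler conditions, and a zero-dimensional tableau is realised by sending the whole
outflow of each row through its single `1`.
-/

open Filter Topology

lemma eq_zero_of_mem_extremePoints_of_add_mem_of_sub_mem {E : Type*} [AddCommGroup E]
    [Module ℝ E] {A : Set E} {x v : E} (hx : x ∈ A.extremePoints ℝ) (hadd : x + v ∈ A)
    (hsub : x - v ∈ A) : v = 0 := by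
  have hmid : x ∈ openSegment ℝ (x + v) (x - v) :=
    ⟨1 / 2, 1 / 2, by norm_num, by norm_num, by norm_num, by module⟩
  simpa using hx.2 hadd hsub hmid

lemma eq_of_sum_eq_of_pos_imp_pos {ι : Type*} [Fintype ι] {u v : ι → ℝ} (hu : 0 ≤ u)
    (hv : 0 ≤ v) (hu₁ : {i | 0 < u i}.Subsingleton) (hvu : ∀ i, 0 < v i → 0 < u i)
    (hsum : ∑ i, u i = ∑ i, v i) : v = u := by
  by_cases hpos : ∃ j, 0 < u j
  · obtain ⟨j, hj⟩ := hpos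
    have hoff : ∀ i ≠ j, u i = 0 ∧ v i = 0 := fun i hij =>
      have hu0 : ¬ 0 < u i := fun h => hij (hu₁ h hj)
      ⟨le_antisymm (not_lt.1 hu0) (hu i), le_antisymm (not_lt.1 (hu0 ∘ hvu i)) (hv i)⟩
    rw [Fintype.sum_eq_single j fun i hij => (hoff i hij).1,
      Fintype.sum_eq_single j fun i hij => (hoff i hij).2] at hsum
    funext i
    rcases eq_or_ne i j with rfl | hij
    · exact hsum.symm
    · rw [(hoff i hij).1, (hoff i hij).2]
  · push Not at hpos
    funext i
    have hu0 : u i = 0 := le_antisymm (hpos i) (hu i)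
    rw [hu0]
    exact le_antisymm (not_lt.1 fun h => (hvu i h).ne' hu0) (hv i)

section

variable {n : ℕ} {a : Fin n → ℕ} {x y δ : Fin n → Fin n → ℝ}

def hookSum (k : Fin n) : (Fin n → Fin n → ℝ) →ₗ[ℝ] ℝ where
  toFun x := (∑ j ∈ univ.filter (fun j => k ≤ j), x k j)
    - ∑ i ∈ univ.filter (fun i => i < k), x i k
  map_add' x y := by simp only [Pi.add_apply, sum_add_distrib]; ring
  map_smul' c x := by simp only [Pi.smul_apply, smul_eq_mul, ← mul_sum, RingHom.id_apply]; ring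

lemma hookSum_single {r c : Fin n} (hrc : r ≤ c) (k : Fin n) :
    hookSum k (Pi.single r (Pi.single c 1))
      = (if k = r then 1 else 0) - if k = c ∧ r < c then 1 else 0 := by
  simp only [hookSum, LinearMap.coe_mk, AddHom.coe_mk, Pi.single_apply, ite_apply, Pi.zero_apply]
  rcases eq_or_ne k r with rfl | hkr <;> rcases eq_or_ne k c with rfl | hkc <;>
    simp [sum_ite_eq', *]

def HasSubsingletonRowSupport (x : Fin n → Fin n → ℝ) : Prop :=
  ∀ i, {j | 0 < x i j}.Subsingleton

namespace TeslerPolytope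

lemma nonneg (hx : x ∈ TeslerPolytope n a) (i j : Fin n) : 0 ≤ x i j := by
  rcases le_or_gt i j with h | h
  · exact hx.2.1 i j h
  · exact (hx.1 i j h).ge

lemma le_of_pos (hx : x ∈ TeslerPolytope n a) {i j : Fin n} (h : 0 < x i j) : i ≤ j :=
  not_lt.1 fun hji => h.ne' (hx.1 i j hji)

lemma sum_row_eq_add_sum_column (hx : x ∈ TeslerPolytope n a) (k : Fin n) :
    ∑ j, x k j = a k + ∑ i ∈ univ.filter (fun i => i < k), x i k := by
  have hrow : ∑ j ∈ univ.filter (fun j => k ≤ j), x k j = ∑ j, x k j :=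
    sum_filter_of_ne fun j _ hj => not_lt.1 fun hjk => hj (hx.1 k j hjk)
  have := hx.2.2 k
  linarith

lemma exists_pos_in_row_iff (hx : x ∈ TeslerPolytope n a) (j : Fin n) :
    (∃ k, 0 < x j k) ↔ 0 < a j ∨ ∃ i < j, 0 < x i j := by
  have hin := sum_pos_iff_of_nonneg (s := univ.filter (fun i => i < j)) fun i _ => nonneg hx i j
  have hout := sum_pos_iff_of_nonneg (s := univ) fun k _ => nonneg hx j k
  simp only [mem_univ, true_and, mem_filter] at hin hout
  rw [← hout, ← hin, sum_row_eq_add_sum_column hx j]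
  have := sum_nonneg fun i (_ : i ∈ univ.filter (fun i => i < j)) => nonneg hx i j
  constructor
  · intro h
    by_contra! hle
    have : (a j : ℝ) ≤ 0 := by exact_mod_cast hle.1
    linarith
  · rintro (h | h)
    · have : (0 : ℝ) < a j := by exact_mod_cast h
      linarith
    · positivity

/-- Row by row from the top, the inflow of `y` agrees with that of `x`, hence so does the row
sum, and a row sum determines a row with a single positive entry. -/
lemma eq_of_pos_imp_pos (hx : x ∈ TeslerPolytope n a) (hy : y ∈ TeslerPolytope n a)
    (hxrow : HasSubsingletonRowSupport x) (hyx : ∀ i j, 0 < y i j → 0 < x i j) : y = x := by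
  funext i
  induction i using WellFoundedLT.induction with
  | _ i ih =>
    have hinflow : ∑ p ∈ univ.filter (fun p => p < i), y p i
        = ∑ p ∈ univ.filter (fun p => p < i), x p i :=
      sum_congr rfl fun p hp => congrFun (ih p (mem_filter.1 hp).2) i
    refine eq_of_sum_eq_of_pos_imp_pos (nonneg hx i) (nonneg hy i) (hxrow i) (hyx i) ?_
    rw [sum_row_eq_add_sum_column hx, sum_row_eq_add_sum_column hy, hinflow]

lemma mem_extremePoints_of_hasSubsingletonRowSupport (hx : x ∈ TeslerPolytope n a)
    (hxrow : HasSubsingletonRowSupport x) : x ∈ (TeslerPolytope n a).extremePoints ℝ := by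
  refine ⟨hx, fun y hy z hz hseg => ?_⟩
  obtain ⟨s, t, hs, ht, -, rfl⟩ := hseg
  refine eq_of_pos_imp_pos hx hy hxrow fun i j hyij => ?_
  have := nonneg hz i j
  simp only [Pi.add_apply, Pi.smul_apply, smul_eq_mul]
  positivity

/-- A unit of flow entering the staircase at row `r` through the positive entry `(r, c)` and
running down along positive entries of `x` until it leaves through a diagonal entry. -/
lemma exists_unit_flow (hx : x ∈ TeslerPolytope n a) (r : Fin n) :
    ∀ c, 0 < x r c → ∃ p : Fin n → Fin n → ℝ,
      (∀ i j, p i j ≠ 0 → r ≤ i ∧ 0 < x i j) ∧ (∀ j, p r j = if j = c then 1 else 0) ∧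
      ∀ k, hookSum k p = if k = r then 1 else 0 := by
  induction r using WellFoundedGT.induction with
  | _ r ih =>
    intro c hrc
    rcases (le_of_pos hx hrc).lt_or_eq with hlt | rfl
    · obtain ⟨d, hcd⟩ := (exists_pos_in_row_iff hx c).2 (Or.inr ⟨r, hlt, hrc⟩)
      obtain ⟨q, hqx, -, hqhook⟩ := ih c hlt d hcd
      have hqr : ∀ j, q r j = 0 := fun j => by_contra fun h => hlt.not_ge (hqx r j h).1
      refine ⟨Pi.single r (Pi.single c 1) + q, fun i j hij => ?_, fun j => ?_, fun k => ?_⟩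
      · by_cases hq : q i j = 0
        · have hsingle : i = r ∧ j = c := by
            by_contra h
            simp [Pi.single_apply, ite_apply, hq, h] at hij
          obtain ⟨rfl, rfl⟩ := hsingle
          exact ⟨le_rfl, hrc⟩
        · exact ⟨hlt.le.trans (hqx i j hq).1, (hqx i j hq).2⟩
      · simp [Pi.single_apply, hqr]
      · rw [map_add, hookSum_single hlt.le, hqhook]
        grind
    · refine ⟨Pi.single r (Pi.single r 1), fun i j hij => ?_, fun j => ?_, fun k => ?_⟩
      · obtain ⟨rfl, rfl⟩ : i = r ∧ j = r := by simpa [Pi.single_apply, ite_apply] using hij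
        exact ⟨le_rfl, hrc⟩
      · simp [Pi.single_apply]
      · simp [hookSum_single le_rfl]

lemma eventually_add_smul_mem (hx : x ∈ TeslerPolytope n a) (hδ : ∀ k, hookSum k δ = 0)
    (hδx : ∀ i j, δ i j ≠ 0 → 0 < x i j) :
    ∀ᶠ t in 𝓝 (0 : ℝ), x + t • δ ∈ TeslerPolytope n a := by
  have hpos : ∀ᶠ t in 𝓝 (0 : ℝ), ∀ i j, 0 < x i j → 0 < x i j + t * δ i j := by
    refine eventually_all.2 fun i => eventually_all.2 fun j => ?_
    by_cases hij : 0 < x i j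
    · have hcont : Continuous fun t : ℝ => x i j + t * δ i j := by fun_prop
      filter_upwards [(hcont.tendsto' 0 (x i j) (by simp)).eventually (lt_mem_nhds hij)]
        with t ht using fun _ => ht
    · exact .of_forall fun _ h => absurd h hij
  filter_upwards [hpos] with t ht
  have hδ0 : ∀ i j, ¬ 0 < x i j → δ i j = 0 := fun i j h => by_contra (h ∘ hδx i j)
  refine ⟨fun i j hji => ?_, fun i j _ => ?_, fun k => ?_⟩
  · simp [hx.1 i j hji, hδ0 i j (hx.1 i j hji).not_gt]
  · by_cases hij : 0 < x i j
    · exact (ht i j hij).le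
    · simp [hδ0 i j hij, nonneg hx i j]
  · change hookSum k (x + t • δ) = a k
    rw [map_add, map_smul, hδ, smul_zero, add_zero]
    exact hx.2.2 k

lemma eq_zero_of_mem_extremePoints (hx : x ∈ (TeslerPolytope n a).extremePoints ℝ)
    (hδ : ∀ k, hookSum k δ = 0) (hδx : ∀ i j, δ i j ≠ 0 → 0 < x i j) : δ = 0 := by
  obtain ⟨ε, hε, hball⟩ := Metric.eventually_nhds_iff.1 (eventually_add_smul_mem hx.1 hδ hδx)
  have hhalf : |ε / 2| < ε := by rw [abs_of_pos (half_pos hε)]; linarith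
  have hadd := @hball (ε / 2) (by rwa [Real.dist_eq, sub_zero])
  have hsub := @hball (-(ε / 2)) (by rwa [Real.dist_eq, sub_zero, abs_neg])
  rw [neg_smul, ← sub_eq_add_neg] at hsub
  have := eq_zero_of_mem_extremePoints_of_add_mem_of_sub_mem hx hadd hsub
  exact (smul_eq_zero.1 this).resolve_left (half_pos hε).ne'

lemma hasSubsingletonRowSupport_of_mem_extremePoints
    (hx : x ∈ (TeslerPolytope n a).extremePoints ℝ) : HasSubsingletonRowSupport x := by
  intro i j hj k hk
  by_contra hjk
  obtain ⟨p, hpx, hpi, hphook⟩ := exists_unit_flow hx.1 i j hj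
  obtain ⟨q, hqx, hqi, hqhook⟩ := exists_unit_flow hx.1 i k hk
  have hpq : p - q = 0 := by
    refine eq_zero_of_mem_extremePoints hx (fun l => by simp [hphook, hqhook]) fun l m hlm => ?_
    by_cases hp : p l m = 0
    · exact (hqx l m fun hq => hlm (by simp [hp, hq])).2
    · exact (hpx l m hp).2
  simpa [hpi, hqi, hjk] using congrFun (congrFun hpq i) j

end TeslerPolytope

noncomputable def supportTableau (x : Fin n → Fin n → ℝ) : Fin n → Fin n → ℕ :=
  fun i j => if 0 < x i j then 1 else 0

@[simp]
lemma supportTableau_eq_one {i j : Fin n} : supportTableau x i j = 1 ↔ 0 < x i j := by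
  unfold supportTableau; split_ifs with h <;> simp [h]

@[simp]
lemma supportTableau_eq_zero {i j : Fin n} : supportTableau x i j = 0 ↔ ¬ 0 < x i j := by
  unfold supportTableau; split_ifs with h <;> simp [h]

lemma supportTableau_le_one (i j : Fin n) : supportTableau x i j ≤ 1 := by
  unfold supportTableau; split_ifs <;> simp

lemma isTeslerTableau_supportTableau (hx : x ∈ TeslerPolytope n a) :
    IsTeslerTableau n a (supportTableau x) := by
  have hrow := TeslerPolytope.exists_pos_in_row_iff hx
  refine ⟨fun i j hij => ?_, supportTableau_le_one, fun i hi => ?_, fun i j hij h => ?_,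
    fun j hj hcol k _ => ?_⟩
  · exact supportTableau_eq_zero.2 fun h => hij (TeslerPolytope.le_of_pos hx h)
  · obtain ⟨j, hj⟩ := (hrow i).2 (Or.inl hi)
    exact ⟨j, TeslerPolytope.le_of_pos hx hj, supportTableau_eq_one.2 hj⟩
  · obtain ⟨k, hk⟩ := (hrow j).2 (Or.inr ⟨i, hij, supportTableau_eq_one.1 h⟩)
    exact ⟨k, TeslerPolytope.le_of_pos hx hk, supportTableau_eq_one.2 hk⟩
  · refine supportTableau_eq_zero.2 fun hk => ?_
    obtain h | ⟨i, hij, hi⟩ := (hrow j).1 ⟨k, hk⟩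
    · exact h.ne' hj
    · exact supportTableau_eq_zero.1 (hcol i hij) hi

lemma tabDim_eq_zero_iff {T : Fin n → Fin n → ℕ} :
    tabDim n T = 0 ↔ ∀ i, {j | T i j = 1}.Subsingleton := by
  simp [tabDim, sum_eq_zero_iff, Nat.sub_eq_zero_iff_le, card_le_one, Set.Subsingleton]

lemma tabDim_supportTableau_eq_zero_iff :
    tabDim n (supportTableau x) = 0 ↔ HasSubsingletonRowSupport x := by
  simp [tabDim_eq_zero_iff, HasSubsingletonRowSupport]

/-- The total flow leaving row `i` of the point built from a tableau `T`: the flow `a i`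
created at `i` plus everything arriving along the `1`s of column `i`. -/
noncomputable def tableauOutflow (a : Fin n → ℕ) (T : Fin n → Fin n → ℕ) (i : Fin n) : ℝ :=
  a i + ∑ p ∈ (univ.filter (fun p => p < i)).attach,
    if T p i = 1 then tableauOutflow a T p else 0
termination_by i
decreasing_by exact (mem_filter.1 p.2).2

noncomputable def tableauPoint (a : Fin n → ℕ) (T : Fin n → Fin n → ℕ) : Fin n → Fin n → ℝ :=
  fun i j => if T i j = 1 then tableauOutflow a T i else 0

variable {T : Fin n → Fin n → ℕ}

lemma tableauOutflow_eq (i : Fin n) :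
    tableauOutflow a T i = a i + ∑ p ∈ univ.filter (fun p => p < i), tableauPoint a T p i := by
  rw [tableauOutflow, sum_attach (univ.filter (fun p => p < i))
    fun p => if T p i = 1 then tableauOutflow a T p else 0]
  rfl

lemma tableauOutflow_pos (hT : IsTeslerTableau n a T) (i : Fin n) (hrow : ∃ j, T i j = 1) :
    0 < tableauOutflow a T i := by
  induction i using WellFoundedLT.induction with
  | _ i ih =>
    obtain ⟨j, hj⟩ := hrow
    have hin : ∀ p ∈ univ.filter (fun p => p < i), 0 ≤ tableauPoint a T p i := by
      intro p hp
      unfold tableauPoint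
      split_ifs with hpi
      exacts [(ih p (mem_filter.1 hp).2 ⟨i, hpi⟩).le, le_rfl]
    have hfed : 0 < a i ∨ ∃ p < i, T p i = 1 := by
      by_contra! h
      have hcol : ∀ p < i, T p i = 0 := fun p hp => by
        have := hT.2.1 p i
        have := h.2 p hp
        omega
      have hij : i ≤ j := by_contra fun hij => by simp [hT.1 i j hij] at hj
      have := hT.2.2.2.2 i (by omega) hcol j hij
      omega
    rw [tableauOutflow_eq]
    rcases hfed with ha | ⟨p, hp, hpi⟩
    · have : (0 : ℝ) < a i := by exact_mod_cast ha
      have := sum_nonneg hin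
      linarith
    · have := sum_pos' hin ⟨p, by simpa using hp, by simpa [tableauPoint, hpi] using ih p hp ⟨i, hpi⟩⟩
      positivity

lemma tableauOutflow_eq_zero (hT : IsTeslerTableau n a T) {i : Fin n} (hrow : ∀ j, T i j ≠ 1) :
    tableauOutflow a T i = 0 := by
  have ha : a i = 0 := by
    by_contra ha
    obtain ⟨j, -, hj⟩ := hT.2.2.1 i (Nat.pos_of_ne_zero ha)
    exact hrow j hj
  have hin : ∑ p ∈ univ.filter (fun p => p < i), tableauPoint a T p i = 0 := by
    refine sum_eq_zero fun p hp => if_neg fun hpi => ?_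
    obtain ⟨k, -, hk⟩ := hT.2.2.2.1 p i (mem_filter.1 hp).2 hpi
    exact hrow k hk
  rw [tableauOutflow_eq, ha, hin]
  simp

lemma tableauPoint_pos_iff (hT : IsTeslerTableau n a T) {i j : Fin n} :
    0 < tableauPoint a T i j ↔ T i j = 1 := by
  unfold tableauPoint
  split_ifs with h
  · simpa [h] using tableauOutflow_pos hT i ⟨j, h⟩
  · simp [h]

lemma supportTableau_tableauPoint (hT : IsTeslerTableau n a T) :
    supportTableau (tableauPoint a T) = T := by
  funext i j
  by_cases h : T i j = 1
  · simp [h, tableauPoint_pos_iff hT]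
  · have := hT.2.1 i j
    rw [supportTableau_eq_zero.2 (by rwa [tableauPoint_pos_iff hT])]
    omega

lemma sum_tableauPoint_row (hT : IsTeslerTableau n a T) (hdim : ∀ i, {j | T i j = 1}.Subsingleton)
    (i : Fin n) :
    ∑ j ∈ univ.filter (fun j => i ≤ j), tableauPoint a T i j = tableauOutflow a T i := by
  by_cases hrow : ∃ j, T i j = 1
  · obtain ⟨j, hj⟩ := hrow
    have hij : i ≤ j := by_contra fun hij => by simp [hT.1 i j hij] at hj
    have hoff : ∀ k ≠ j, tableauPoint a T i k = 0 := fun k hkj =>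
      if_neg fun hk => hkj (hdim i hk hj)
    rw [sum_eq_single_of_mem j (by simpa using hij) fun k _ hkj => hoff k hkj]
    simp [tableauPoint, hj]
  · push Not at hrow
    rw [tableauOutflow_eq_zero hT hrow]
    exact sum_eq_zero fun j _ => if_neg (hrow j)

lemma tableauPoint_mem (hT : IsTeslerTableau n a T) (hdim : ∀ i, {j | T i j = 1}.Subsingleton) :
    tableauPoint a T ∈ TeslerPolytope n a := by
  refine ⟨fun i j hji => if_neg fun h => ?_, fun i j _ => ?_, fun k => ?_⟩
  · simp [hT.1 i j hji.not_ge] at h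
  · unfold tableauPoint
    split_ifs with h
    exacts [(tableauOutflow_pos hT i ⟨j, h⟩).le, le_rfl]
  · have := tableauOutflow_eq (a := a) (T := T) k
    rw [sum_tableauPoint_row hT hdim k]
    linarith

end

/-- The support map `x ↦ T_x`, where `T_x(i,j) = 1` if `x_{i,j} > 0` and `0`
otherwise, is a bijection from the set of extreme points (vertices) of `Tes_n(a)`
onto the set of zero-dimensional `a`-Tesler tableaux. -/
theorem support_bijOn_vertices (n : ℕ) (a : Fin n → ℕ) :
    Set.BijOn (fun x : Fin n → Fin n → ℝ => fun i j : Fin n => if 0 < x i j then 1 else 0)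
      (Set.extremePoints ℝ (TeslerPolytope n a))
      {T : Fin n → Fin n → ℕ | IsTeslerTableau n a T ∧ tabDim n T = 0} := by
  change Set.BijOn supportTableau _ _
  refine ⟨fun x hx => ?_, fun x hx y hy hxy => ?_, fun T ⟨hT, hdim⟩ => ?_⟩
  · exact ⟨isTeslerTableau_supportTableau hx.1, tabDim_supportTableau_eq_zero_iff.2
      (TeslerPolytope.hasSubsingletonRowSupport_of_mem_extremePoints hx)⟩
  · refine (TeslerPolytope.eq_of_pos_imp_pos hx.1 hy.1
      (TeslerPolytope.hasSubsingletonRowSupport_of_mem_extremePoints hx) fun i j h => ?_).symm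
    rwa [← supportTableau_eq_one, hxy, supportTableau_eq_one]
  · rw [tabDim_eq_zero_iff] at hdim
    have hrow : HasSubsingletonRowSupport (tableauPoint a T) := by
      simpa [HasSubsingletonRowSupport, tableauPoint_pos_iff hT] using hdim
    exact ⟨tableauPoint a T, TeslerPolytope.mem_extremePoints_of_hasSubsingletonRowSupport
      (tableauPoint_mem hT hdim) hrow, supportTableau_tableauPoint hT⟩
end

section
/- Let a = (a_1,…,a_n) be a vector of positive integers. Then the poset of faces of the Tesler polytope Tes_n(a), ordered by inclusion, is order-isomorphic to the product poset ∏_{k=1}^{n} P_k, where P_k is the poset of nonempty subsets of a k-element set ordered by inclusion (equivalently, the face poset of Tes_n(a) is isomorphic to the face poset of the Cartesian product of simplices Δ_1 × Δ_2 × ⋯ × Δ_{n−1}). -/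
open Finset

/-!
`Tes_n(a)` is the intersection of an affine subspace with the nonnegative orthant, so a nonempty
exposed face `F` is determined by its support, the set of entries not identically zero on `F`.
Indeed, `F` is convex, so it contains a point `x` whose support is that of `F`; any point `y` of the
polytope supported there lies on a segment through `x` that extends slightly beyond `x`, so the
functional exposing `F`, maximal at `x`, is also maximal at `y`. Conversely the points supported in
a given support form the face exposed by minus the sum of the remaining entries. As every `a_k > 0`,
each row of a point of `Tes_n(a)` has a nonzero entry, and every upper triangular pattern with
nonempty rows is a support: fill the rows from top to bottom, spreading the total that row `i` must
carry, `a_i` plus the entries above it in column `i`, evenly over its pattern. A pattern is a choice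
of a nonempty subset of the `n - i` entries of each row `i`.
-/

section StandardForm

variable {E ι : Type*} [AddCommGroup E] [Module ℝ E] [TopologicalSpace E]

def coordSupport (c : ι → StrongDual ℝ E) (x : E) : Set ι := {i | c i x ≠ 0}

def coordFace (P : Set E) (c : ι → StrongDual ℝ E) (T : Set ι) : Set E :=
  {x ∈ P | coordSupport c x ⊆ T}

def standardFormPolyhedron (A : AffineSubspace ℝ E) (c : ι → StrongDual ℝ E) : Set E :=
  A ∩ {x | ∀ i, 0 ≤ c i x}

variable {c : ι → StrongDual ℝ E}

lemma coordFace_mono {P : Set E} {T T' : Set ι} (h : T ⊆ T') :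
    coordFace P c T ⊆ coordFace P c T' :=
  fun _ hx => ⟨hx.1, hx.2.trans h⟩

lemma convex_standardFormPolyhedron (A : AffineSubspace ℝ E) :
    Convex ℝ (standardFormPolyhedron A c) := by
  refine A.convex.inter fun x hx y hy p q hp hq _ i => ?_
  have := hx i
  have := hy i
  simp only [map_add, map_smul, smul_eq_mul]
  positivity

lemma isExposed_coordFace [Finite ι] {P : Set E} (hP : ∀ x ∈ P, ∀ i, 0 ≤ c i x) (T : Set ι) :
    IsExposed ℝ P (coordFace P c T) := by
  classical
  have := Fintype.ofFinite ι
  rintro ⟨w, hwP, hw⟩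
  set s := univ.filter (· ∉ T)
  have hzero : ∀ x ∈ P, (∑ i ∈ s, c i x = 0 ↔ x ∈ coordFace P c T) := by
    intro x hx
    rw [sum_eq_zero_iff_of_nonneg fun i _ => hP x hx i]
    simp only [s, mem_filter, mem_univ, true_and, coordFace, coordSupport, Set.subset_def]
    exact ⟨fun h => ⟨hx, fun i => not_imp_comm.1 (h i)⟩, fun h i => not_imp_comm.1 (h.2 i)⟩
  refine ⟨-∑ i ∈ s, c i, Set.Subset.antisymm (fun x hx => ⟨hx.1, fun y hy => ?_⟩) fun x hx => ?_⟩
  · rw [neg_apply, neg_apply, _root_.sum_apply, _root_.sum_apply, (hzero x hx.1).2 hx]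
    simpa using sum_nonneg fun i _ => hP y hy i
  · refine (hzero x hx.1).1 (le_antisymm ?_ (sum_nonneg fun i _ => hP x hx.1 i))
    simpa [(hzero w hwP).2 ⟨hwP, hw⟩] using hx.2 w hwP

lemma exists_coordSupport_eq_biUnion [Finite ι] {F : Set E} (hF : Convex ℝ F) (hne : F.Nonempty)
    (hnn : ∀ x ∈ F, ∀ i, 0 ≤ c i x) :
    ∃ x ∈ F, coordSupport c x = ⋃ y ∈ F, coordSupport c y := by
  classical
  have := Fintype.ofFinite ι
  suffices h : ∀ s : Finset ι, ∃ x ∈ F, ∀ i ∈ s, ∀ y ∈ F, c i y ≠ 0 → c i x ≠ 0 by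
    obtain ⟨x, hx, hmax⟩ := h univ
    refine ⟨x, hx, (Set.subset_biUnion_of_mem hx).antisymm ?_⟩
    simpa [Set.subset_def, coordSupport] using fun i y hy hi => hmax i (mem_univ i) y hy hi
  intro s
  induction s using Finset.induction_on with
  | empty => exact hne.imp fun x hx => ⟨hx, by simp⟩
  | insert i s _ ih =>
    obtain ⟨x, hx, hmax⟩ := ih
    by_cases hi : ∃ y ∈ F, c i y ≠ 0
    · obtain ⟨y, hy, hyi⟩ := hi
      have hmid : ∀ j, c j x ≠ 0 ∨ c j y ≠ 0 → c j ((1 / 2 : ℝ) • x + (1 / 2 : ℝ) • y) ≠ 0 := by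
        intro j hj
        have := hnn x hx j
        have := hnn y hy j
        simp only [map_add, map_smul, smul_eq_mul]
        rcases hj with hj | hj <;> positivity
      refine ⟨_, hF hx hy (by norm_num) (by norm_num) (by norm_num), fun j hj z hz hzj => hmid j ?_⟩
      rcases mem_insert.1 hj with rfl | hj
      · exact .inr hyi
      · exact .inl (hmax j hj z hz hzj)
    · refine ⟨x, hx, fun j hj => ?_⟩
      rcases mem_insert.1 hj with rfl | hj
      · exact fun y hy hyj => (hi ⟨y, hy, hyj⟩).elim
      · exact hmax j hj

open Filter Topology in
lemma IsExposed.mem_of_coordSupport_subset [Finite ι] {A : AffineSubspace ℝ E} {F : Set E}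
    (hF : IsExposed ℝ (standardFormPolyhedron A c) F) {x y : E} (hx : x ∈ F)
    (hy : y ∈ standardFormPolyhedron A c) (hyx : coordSupport c y ⊆ coordSupport c x) : y ∈ F := by
  obtain ⟨l, rfl⟩ := hF ⟨x, hx⟩
  obtain ⟨hxP, hxmax⟩ := hx
  refine ⟨hy, fun z hz => (hxmax z hz).trans ?_⟩
  -- moving slightly from `x` away from `y` stays in the polyhedron, as `supp y ⊆ supp x`
  have hcoord : ∀ i, ∀ᶠ ε in 𝓝 (0 : ℝ), 0 ≤ ε * (c i x - c i y) + c i x := by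
    intro i
    by_cases hi : c i x = 0
    · have : c i y = 0 := not_not.1 fun h => hyx h hi
      simp [hi, this]
    · have hpos : 0 < c i x := (hxP.2 i).lt_of_ne' hi
      have hcont : Continuous fun ε : ℝ => ε * (c i x - c i y) + c i x := by fun_prop
      simpa using hcont.continuousAt.eventually (eventually_ge_nhds (b := 0) (by simpa using hpos))
  obtain ⟨ε, hεP, hε⟩ := (((eventually_all.2 hcoord).filter_mono nhdsWithin_le_nhds).and
    (self_mem_nhdsWithin (s := Set.Ioi 0))).exists
  have hzP : ε • (x -ᵥ y) +ᵥ x ∈ standardFormPolyhedron A c := by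
    refine ⟨A.smul_vsub_vadd_mem ε hxP.1 hy.1 hxP.1, fun i => ?_⟩
    simpa [smul_eq_mul] using hεP i
  have hz := hxmax _ hzP
  simp only [vsub_eq_sub, vadd_eq_add, map_add, map_smul, map_sub, smul_eq_mul] at hz
  nlinarith [show (0 : ℝ) < ε from hε]

lemma IsExposed.eq_coordFace_biUnion [Finite ι] {A : AffineSubspace ℝ E} {F : Set E}
    (hF : IsExposed ℝ (standardFormPolyhedron A c) F) (hne : F.Nonempty) :
    F = coordFace (standardFormPolyhedron A c) c (⋃ y ∈ F, coordSupport c y) := by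
  refine Set.Subset.antisymm (fun x hx => ⟨hF.subset hx, Set.subset_biUnion_of_mem hx⟩) ?_
  obtain ⟨x, hx, hsupp⟩ := exists_coordSupport_eq_biUnion
    (hF.convex (convex_standardFormPolyhedron A)) hne fun x hx => (hF.subset hx).2
  exact fun y hy => hF.mem_of_coordSupport_subset hx hy.1 (hsupp ▸ hy.2)

variable (c) in
noncomputable def exposedFacesOrderIsoCoordSupports [Finite ι] (A : AffineSubspace ℝ E) :
    {F : Set E // F.Nonempty ∧ IsExposed ℝ (standardFormPolyhedron A c) F} ≃o
      coordSupport c '' standardFormPolyhedron A c :=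
  Equiv.toOrderIso
    { toFun F := ⟨⋃ y ∈ F.1, coordSupport c y,
        (exists_coordSupport_eq_biUnion (F.2.2.convex (convex_standardFormPolyhedron A)) F.2.1
          fun x hx => (F.2.2.subset hx).2).imp fun _ hx => ⟨F.2.2.subset hx.1, hx.2⟩⟩
      invFun T := ⟨coordFace (standardFormPolyhedron A c) c T,
        T.2.imp fun _ hx => ⟨hx.1, hx.2.le⟩, isExposed_coordFace (fun _ hx => hx.2) (T : Set ι)⟩
      left_inv F := Subtype.ext (F.2.2.eq_coordFace_biUnion F.2.1).symm
      right_inv := by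
        rintro ⟨_, x, hx, rfl⟩
        exact Subtype.ext <| Set.iUnion₂_subset (fun y hy => hy.2) |>.antisymm <|
          Set.subset_biUnion_of_mem (u := coordSupport c) ⟨hx, subset_rfl⟩ }
    (fun _ _ h => Set.biUnion_subset_biUnion_left h) (fun _ _ h => coordFace_mono h)

end StandardForm

namespace Tesler

variable {n : ℕ}

def hookSum (x : Fin n → Fin n → ℝ) (k : Fin n) : ℝ :=
  ∑ j with k ≤ j, x k j - ∑ i with i < k, x i k

def hookAffineSubspace (n : ℕ) (a : Fin n → ℕ) : AffineSubspace ℝ (Fin n → Fin n → ℝ) where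
  carrier := {x | (∀ i j, j < i → x i j = 0) ∧ ∀ k, hookSum x k = a k}
  smul_vsub_vadd_mem' r x y z hx hy hz := by
    refine ⟨fun i j hji => by simp [hx.1 i j hji, hy.1 i j hji, hz.1 i j hji], fun k => ?_⟩
    have hxk := hx.2 k
    have hyk := hy.2 k
    have hzk := hz.2 k
    simp only [hookSum, vsub_eq_sub, vadd_eq_add, Pi.add_apply, Pi.smul_apply, Pi.sub_apply,
      smul_eq_mul, sum_add_distrib, ← mul_sum, sum_sub_distrib] at hxk hyk hzk ⊢
    linear_combination r * hxk - r * hyk + hzk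

def entry (p : Fin n × Fin n) : StrongDual ℝ (Fin n → Fin n → ℝ) :=
  (ContinuousLinearMap.proj (R := ℝ) (φ := fun _ : Fin n => ℝ) p.2).comp
    (ContinuousLinearMap.proj (φ := fun _ : Fin n => Fin n → ℝ) p.1)

lemma teslerPolytope_eq_standardFormPolyhedron (a : Fin n → ℕ) :
    TeslerPolytope n a = standardFormPolyhedron (hookAffineSubspace n a) entry := by
  ext x
  simp only [TeslerPolytope, standardFormPolyhedron, Set.mem_inter_iff, SetLike.mem_coe]
  constructor
  · rintro ⟨hlow, hnn, hhook⟩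
    exact ⟨⟨hlow, hhook⟩, fun p => (le_or_gt p.1 p.2).elim (hnn _ _) fun h => (hlow _ _ h).ge⟩
  · rintro ⟨⟨hlow, hhook⟩, hnn⟩
    exact ⟨hlow, fun i j _ => hnn (i, j), hhook⟩

variable {a : Fin n → ℕ}

lemma exists_ne_zero_of_mem_teslerPolytope (ha : ∀ i, 0 < a i) {x : Fin n → Fin n → ℝ}
    (hx : x ∈ TeslerPolytope n a) (i : Fin n) : ∃ j, x i j ≠ 0 := by
  have hin : 0 ≤ ∑ i' with i' < i, x i' i :=
    sum_nonneg fun i' hi' => hx.2.1 i' i (mem_filter.1 hi').2.le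
  have hout : ∑ j with i ≤ j, x i j ≠ 0 := by
    have := hx.2.2 i
    have : (0 : ℝ) < a i := by exact_mod_cast ha i
    linarith
  obtain ⟨j, -, hj⟩ := exists_ne_zero_of_sum_ne_zero hout
  exact ⟨j, hj⟩

section Witness

variable (a) (T : Set (Fin n × Fin n))

open Classical in
noncomputable def rowTotal (i : Fin n) : ℝ :=
  a i + ∑ i' ∈ (univ.filter (· < i)).attach,
    if (i'.1, i) ∈ T then rowTotal i'.1 / #{j | (i'.1, j) ∈ T} else 0
termination_by i
decreasing_by exact (mem_filter.1 i'.2).2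

open Classical in
noncomputable def witness (i j : Fin n) : ℝ :=
  if (i, j) ∈ T then rowTotal a T i / #{j | (i, j) ∈ T} else 0

lemma rowTotal_eq (i : Fin n) : rowTotal a T i = a i + ∑ i' with i' < i, witness a T i' i := by
  rw [rowTotal]
  exact congrArg _ (sum_attach _ fun i' => witness a T i' i)

variable {a}

lemma rowTotal_pos (ha : ∀ i, 0 < a i) (i : Fin n) : 0 < rowTotal a T i := by
  induction i using WellFoundedLT.induction with
  | ind i ih =>
    rw [rowTotal_eq]
    have : 0 ≤ ∑ i' with i' < i, witness a T i' i := sum_nonneg fun i' hi' => by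
      have := ih i' (mem_filter.1 hi').2
      unfold witness
      split_ifs <;> positivity
    have : (0 : ℝ) < a i := by exact_mod_cast ha i
    positivity

lemma witness_nonneg (ha : ∀ i, 0 < a i) (i j : Fin n) : 0 ≤ witness a T i j := by
  have := rowTotal_pos T ha i
  unfold witness
  split_ifs <;> positivity

lemma witness_ne_zero_iff (ha : ∀ i, 0 < a i) {i j : Fin n} :
    witness a T i j ≠ 0 ↔ (i, j) ∈ T := by
  classical
  refine ⟨fun h => not_not.1 fun hij => h (if_neg hij), fun hij => ?_⟩
  have hcard : 0 < #{j | (i, j) ∈ T} := card_pos.2 ⟨j, by simpa using hij⟩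
  have := rowTotal_pos T ha i
  rw [witness, if_pos hij]
  positivity

lemma sum_witness_row (hT : ∀ p ∈ T, p.1 ≤ p.2) {i j : Fin n} (hij : (i, j) ∈ T) :
    ∑ j with i ≤ j, witness a T i j = rowTotal a T i := by
  classical
  have hcard : (#{j | (i, j) ∈ T} : ℝ) ≠ 0 :=
    Nat.cast_ne_zero.2 (card_pos.2 ⟨j, by simpa using hij⟩).ne'
  have hrow : univ.filter (fun j => i ≤ j ∧ (i, j) ∈ T) = univ.filter fun j => (i, j) ∈ T :=
    filter_congr fun j _ => and_iff_right_of_imp (hT (i, j))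
  simp only [witness]
  rw [← sum_filter, filter_filter, hrow, sum_const, nsmul_eq_mul, mul_div_cancel₀ _ hcard]

lemma witness_mem_teslerPolytope (ha : ∀ i, 0 < a i) (hT : ∀ p ∈ T, p.1 ≤ p.2)
    (hrow : ∀ i, ∃ j, (i, j) ∈ T) : witness a T ∈ TeslerPolytope n a := by
  refine ⟨fun i j hji => ?_, fun i j _ => witness_nonneg T ha i j, fun k => ?_⟩
  · exact not_not.1 fun h => (hT _ ((witness_ne_zero_iff T ha).1 h)).not_gt hji
  · obtain ⟨j, hj⟩ := hrow k
    rw [sum_witness_row T hT hj, rowTotal_eq]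
    ring

lemma coordSupport_witness (ha : ∀ i, 0 < a i) : coordSupport entry (witness a T) = T :=
  Set.ext fun _ => witness_ne_zero_iff T ha

end Witness

lemma coordSupport_image_teslerPolytope (ha : ∀ i, 0 < a i) :
    coordSupport entry '' TeslerPolytope n a =
      {T | (∀ p ∈ T, p.1 ≤ p.2) ∧ ∀ i, ∃ j, (i, j) ∈ T} := by
  refine Set.Subset.antisymm ?_ fun T ⟨hT, hrow⟩ =>
    ⟨witness a T, witness_mem_teslerPolytope T ha hT hrow, coordSupport_witness T ha⟩
  rintro _ ⟨x, hx, rfl⟩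
  exact ⟨fun p hp => not_lt.1 fun h => hp (hx.1 _ _ h),
    exists_ne_zero_of_mem_teslerPolytope ha hx⟩

-- Row `k.rev` has the `k + 1` entries `rowEntry k j`, `j : Fin (k + 1)`.
def rowEntry (k : Fin n) (j : Fin (k + 1)) : Fin n :=
  ⟨k.rev + j, by have := j.isLt; rw [Fin.val_rev]; omega⟩

lemma rev_le_rowEntry (k : Fin n) (j : Fin (k + 1)) : k.rev ≤ rowEntry k j :=
  Fin.le_def.2 (Nat.le_add_right _ _)

lemma exists_rowEntry_eq {k j : Fin n} (h : k.rev ≤ j) :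
    ∃ j' : Fin (k + 1), rowEntry k j' = j := by
  have := j.isLt
  rw [Fin.le_def, Fin.val_rev] at h
  exact ⟨⟨j - k.rev, by rw [Fin.val_rev]; omega⟩,
    Fin.ext (by simp only [rowEntry, Fin.val_rev]; omega)⟩

def rowPattern : (∀ k : Fin n, {s : Finset (Fin (k + 1)) // s.Nonempty}) ↪o Set (Fin n × Fin n) :=
  OrderEmbedding.ofMapLEIff (fun S => {p | ∃ k, ∃ j ∈ (S k).1, (k.rev, rowEntry k j) = p}) <| by
    refine fun S S' => ⟨fun h k j hj => ?_, fun h _ ⟨k, j, hj, hp⟩ => ⟨k, j, h k hj, hp⟩⟩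
    obtain ⟨k', j', hj', he⟩ := h ⟨k, j, hj, rfl⟩
    obtain ⟨hk, he⟩ := Prod.mk.inj he
    obtain rfl := Fin.rev_injective hk
    obtain rfl : j' = j := Fin.ext (by simpa [rowEntry] using congrArg Fin.val he)
    exact hj'

lemma range_rowPattern :
    Set.range (rowPattern (n := n)) = {T | (∀ p ∈ T, p.1 ≤ p.2) ∧ ∀ i, ∃ j, (i, j) ∈ T} := by
  classical
  refine Set.Subset.antisymm ?_ fun T ⟨hT, hrow⟩ => ?_
  · rintro _ ⟨S, rfl⟩
    refine ⟨fun _ ⟨k, j, _, hp⟩ => hp ▸ rev_le_rowEntry k j, fun i => ?_⟩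
    obtain ⟨k, rfl⟩ := Fin.rev_surjective i
    obtain ⟨j, hj⟩ := (S k).2
    exact ⟨rowEntry k j, k, j, hj, rfl⟩
  refine ⟨fun k => ⟨univ.filter fun j => (k.rev, rowEntry k j) ∈ T, ?_⟩, Set.ext fun p => ?_⟩
  · obtain ⟨j, hj⟩ := hrow k.rev
    obtain ⟨j', rfl⟩ := exists_rowEntry_eq (hT _ hj)
    exact ⟨j', mem_filter.2 ⟨mem_univ _, hj⟩⟩
  refine ⟨fun ⟨k, j, hj, hp⟩ => hp ▸ (mem_filter.1 hj).2, fun hp => ?_⟩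
  obtain ⟨i, j⟩ := p
  obtain ⟨k, rfl⟩ := Fin.rev_surjective i
  obtain ⟨j', rfl⟩ := exists_rowEntry_eq (hT _ hp)
  exact ⟨k, j', mem_filter.2 ⟨mem_univ _, hp⟩, rfl⟩

end Tesler

open Tesler in
/-- For a vector `a` of positive integers, the poset of (nonempty, exposed) faces of
`Tes_n(a)` ordered by inclusion is order-isomorphic to the product over `k = 1, …, n`
of the posets of nonempty subsets of a `k`-element set ordered by inclusion
(equivalently, to the face poset of `Δ_1 × Δ_2 × ⋯ × Δ_{n-1}`). -/
theorem teslerPolytope_face_poset_product (n : ℕ) (a : Fin n → ℕ) (ha : ∀ i, 0 < a i) :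
    Nonempty
      (({F : Set (Fin n → Fin n → ℝ) //
          F.Nonempty ∧ IsExposed ℝ (TeslerPolytope n a) F} ≃o
        (∀ k : Fin n, {s : Finset (Fin ((k : ℕ) + 1)) // s.Nonempty}))) := by
  have faces := exposedFacesOrderIsoCoordSupports entry (hookAffineSubspace n a)
  rw [← teslerPolytope_eq_standardFormPolyhedron, coordSupport_image_teslerPolytope ha,
    ← range_rowPattern] at faces
  exact ⟨faces.trans rowPattern.orderIso.symm⟩
end
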